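/- For every pair of integers 0 ≤ j, k ≤ n−1, the series ∑_{x∈ℤ} Φ_j(x) Ψ_k(x) converges absolutely, and ∑_{x∈ℤ} Φ_j(x) Ψ_k(x) = δ_{j,k} (equal to 1 if j = k and 0 otherwise). -/

import Mathlib

open Complex MeasureTheory
open scoped Real

/-- `Ψ_k(x) = (1/(2πi)) ∮_{|w|=ρ} (w−1)^k w^{−(x+n+1)} e^{aw + b/w} dw`. -/
noncomputable def Psi (n : ℕ) (a b ρ : ℝ) (k : ℕ) (x : ℤ) : ℂ :=
  (2 * (Real.pi : ℂ) * Complex.I)⁻¹ *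
    ∮ w in C(0, ρ), (w - 1) ^ k * w ^ (-(x + (n : ℤ) + 1)) *
      Complex.exp ((a : ℂ) * w + (b : ℂ) / w)

/-- `Φ_j(x) = (1/(2πi)) ∮_{|z−1|=r} z^{x+n} (z−1)^{−(j+1)} e^{−az − b/z} dz`. -/
noncomputable def Phi (n : ℕ) (a b r : ℝ) (j : ℕ) (x : ℤ) : ℂ :=
  (2 * (Real.pi : ℂ) * Complex.I)⁻¹ *
    ∮ z in C(1, r), z ^ (x + (n : ℤ)) * (z - 1) ^ (-((j : ℤ) + 1)) *
      Complex.exp (-((a : ℂ) * z) - (b : ℂ) / z)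

/-!
`Ψ_k(x)` is the Laurent coefficient `c_{x+n}` of `F(w) = (w - 1)^k e^{aw + b/w}`, which is
holomorphic on `ℂ ∖ {0}`. Cauchy estimates on circles of radius `2t` and `t/2` make
`∑ₘ |cₘ| tᵐ` finite for every `t > 0`, so the Laurent series `∑ₘ cₘ zᵐ = F(z)` converges
absolutely and uniformly on the circle `|z - 1| = r`. Summing `Φ_j(x) Ψ_k(x)` under the integral
defining `Φ_j` therefore gives
`(2πi)⁻¹ ∮ (z - 1)^{-(j+1)} e^{-az - b/z} F(z) dz = (2πi)⁻¹ ∮ (z - 1)^{k-j-1} dz = δ_{jk}`.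
-/

open Metric Set

theorem zpow_le_zpow_add_zpow {a b x : ℝ} (ha : 0 < a) (hax : a ≤ x) (hxb : x ≤ b) (m : ℤ) :
    x ^ m ≤ a ^ m + b ^ m := by
  rcases le_or_gt 0 m with hm | hm
  · linarith [zpow_le_zpow_left₀ hm (ha.le.trans hax) hxb, zpow_nonneg ha.le m]
  · have hx : x⁻¹ ≤ a⁻¹ := inv_anti₀ ha hax
    have := zpow_le_zpow_left₀ (neg_nonneg.mpr hm.le) (inv_nonneg.mpr (ha.trans_le hax).le) hx
    rw [inv_zpow', inv_zpow', neg_neg] at this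
    linarith [zpow_nonneg (ha.trans_le (hax.trans hxb)).le m]

theorem ne_zero_of_mem_sphere_of_lt_norm {c z : ℂ} {r : ℝ} (hr : r < ‖c‖) (hz : z ∈ sphere c r) :
    z ≠ 0 := by
  rintro rfl
  exact hr.ne' (by simpa using hz)

theorem hasSum_circleIntegral_of_dominated {E : Type*} [NormedAddCommGroup E] [NormedSpace ℂ E]
    [CompleteSpace E] {ι : Type*} [Countable ι] {F : ι → ℂ → E} {G : ℂ → E} {c : ℂ} {R : ℝ}
    (hR : 0 ≤ R) (hF : ∀ i, CircleIntegrable (F i) c R) {bound : ι → ℝ}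
    (h_bound : ∀ i, ∀ z ∈ sphere c R, ‖F i z‖ ≤ bound i) (bound_summable : Summable bound)
    (h_lim : ∀ z ∈ sphere c R, HasSum (fun i => F i z) (G z)) :
    HasSum (fun i => ∮ z in C(c, R), F i z) (∮ z in C(c, R), G z) := by
  refine intervalIntegral.hasSum_integral_of_dominated_convergence (fun i _ => R * bound i)
    (fun i => (hF i).out.def'.1) (fun i => ?_) (.of_forall fun _ _ => bound_summable.mul_left R)
    intervalIntegrable_const (.of_forall fun θ _ => ?_)
  · refine .of_forall fun θ _ => ?_
    simp only [deriv_circleMap, norm_smul, norm_mul, norm_circleMap_zero, abs_of_nonneg hR,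
      norm_I, mul_one]
    exact mul_le_mul_of_nonneg_left (h_bound i _ (circleMap_mem_sphere c hR θ)) hR
  · exact (h_lim _ (circleMap_mem_sphere c hR θ)).const_smul _

theorem circleIntegral_eq_of_differentiableOn_compl_zero {E : Type*} [NormedAddCommGroup E]
    [NormedSpace ℂ E] {g : ℂ → E} (hg : DifferentiableOn ℂ g {0}ᶜ) {s t : ℝ} (hs : 0 < s)
    (ht : 0 < t) : (∮ w in C(0, s), g w) = ∮ w in C(0, t), g w := by
  wlog hst : s ≤ t generalizing s t
  · exact (this ht hs (le_of_not_ge hst)).symm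
  have hsub : closedBall (0 : ℂ) t \ ball 0 s ⊆ {0}ᶜ := fun w hw (h0 : w = 0) =>
    hw.2 (by simp [h0, hs])
  exact (circleIntegral_eq_of_differentiable_on_annulus_off_countable hs hst countable_empty
    (hg.continuousOn.mono hsub) fun w hw => hg.differentiableAt
      (isOpen_compl_singleton.mem_nhds (hsub ⟨ball_subset_closedBall hw.1.1,
        fun h => hw.1.2 (ball_subset_closedBall h)⟩))).symm

theorem circleIntegral_sub_center_zpow {c : ℂ} {r : ℝ} (hr : 0 < r) (n : ℤ) :
    (∮ z in C(c, r), (z - c) ^ n) = if n = -1 then 2 * π * I else 0 := by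
  split_ifs with hn
  · simpa [hn] using circleIntegral.integral_sub_inv_of_mem_ball (mem_ball_self hr)
  · exact circleIntegral.integral_sub_zpow_of_ne hn c c r

theorem hasSum_zpow_mul_circleIntegral_of_norm_lt {g : ℂ → ℂ} {z : ℂ} {R : ℝ}
    (hg : CircleIntegrable g 0 R) (hz : ‖z‖ < R) :
    HasSum (fun m : ℕ => z ^ m * ∮ w in C(0, R), w ^ (-((m : ℤ) + 1)) * g w)
      (∮ w in C(0, R), (w - z)⁻¹ * g w) := by
  have hR : 0 < R := (norm_nonneg z).trans_lt hz
  have h := hasSum_two_pi_I_cauchyPowerSeries_integral hg hz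
  simp only [sub_zero, zero_add, smul_eq_mul] at h
  refine h.congr_fun fun m => ?_
  rw [← circleIntegral.integral_const_mul]
  refine circleIntegral.integral_congr hR.le fun w hw => ?_
  have hw0 : w ≠ 0 := ne_of_mem_sphere hw hR.ne'
  simp only [zpow_neg, zpow_add_one₀ hw0, zpow_natCast, div_pow]
  field_simp

theorem hasSum_zpow_mul_circleIntegral_of_lt_norm {g : ℂ → ℂ} {z : ℂ} {ρ : ℝ} (hρ : 0 ≤ ρ)
    (hg : ContinuousOn g (sphere 0 ρ)) (hz : ρ < ‖z‖) :
    HasSum (fun m : ℕ => z ^ (-((m : ℤ) + 1)) * ∮ w in C(0, ρ), w ^ m * g w)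
      (∮ w in C(0, ρ), (z - w)⁻¹ * g w) := by
  have hz0 : z ≠ 0 := norm_pos_iff.mp (hρ.trans_lt hz)
  obtain ⟨M, hM⟩ := (isCompact_sphere (0 : ℂ) ρ).exists_bound_of_continuousOn hg
  have hq : ρ / ‖z‖ < 1 := (div_lt_one (hρ.trans_lt hz)).mpr hz
  simp_rw [← circleIntegral.integral_const_mul]
  refine hasSum_circleIntegral_of_dominated hρ
    (fun m => (continuousOn_const.mul ((continuous_pow m).continuousOn.mul hg)).circleIntegrable hρ)
    (bound := fun m => ‖z‖⁻¹ * M * (ρ / ‖z‖) ^ m) (fun m w hw => ?_)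
    ((summable_geometric_of_lt_one (by positivity) hq).mul_left _) (fun w hw => ?_)
  · rw [norm_mul, norm_mul, norm_zpow, norm_pow, mem_sphere_zero_iff_norm.mp hw, zpow_neg,
      zpow_add_one₀ (norm_ne_zero_iff.mpr hz0), zpow_natCast]
    calc (‖z‖ ^ m * ‖z‖)⁻¹ * (ρ ^ m * ‖g w‖) ≤ (‖z‖ ^ m * ‖z‖)⁻¹ * (ρ ^ m * M) := by
          gcongr; exact hM w hw
      _ = ‖z‖⁻¹ * M * (ρ / ‖z‖) ^ m := by ring
  · have hw' : ‖w / z‖ < 1 := by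
      rw [norm_div, mem_sphere_zero_iff_norm.mp hw]; exact hq
    have hwz : z - w ≠ 0 := sub_ne_zero.mpr <| by
      rintro rfl; exact hz.ne' (mem_sphere_zero_iff_norm.mp hw)
    have hval : (1 - w / z)⁻¹ * (z⁻¹ * g w) = (z - w)⁻¹ * g w := by field_simp
    refine hval ▸ ((hasSum_geometric_of_norm_lt_one hw').mul_right (z⁻¹ * g w)).congr_fun
      fun m => ?_
    rw [zpow_neg, zpow_add_one₀ hz0, zpow_natCast, div_pow]
    field_simp

noncomputable def laurentCoeff (f : ℂ → ℂ) (s : ℝ) (m : ℤ) : ℂ :=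
  (2 * π * I)⁻¹ * ∮ w in C(0, s), w ^ (-(m + 1)) * f w

section Laurent

variable {f : ℂ → ℂ}

theorem laurentCoeff_eq_of_pos (hf : DifferentiableOn ℂ f {0}ᶜ) {s t : ℝ} (hs : 0 < s)
    (ht : 0 < t) : laurentCoeff f s = laurentCoeff f t := by
  ext m
  rw [laurentCoeff, laurentCoeff, circleIntegral_eq_of_differentiableOn_compl_zero _ hs ht]
  exact fun w hw => ((differentiableAt_zpow.mpr (Or.inl hw)).differentiableWithinAt).mul (hf w hw)

theorem norm_laurentCoeff_le {s M : ℝ} (hs : 0 < s) (hM : ∀ w ∈ sphere (0 : ℂ) s, ‖f w‖ ≤ M)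
    (m : ℤ) : ‖laurentCoeff f s m‖ ≤ M * s ^ (-m) := by
  have hbound : ∀ w ∈ sphere (0 : ℂ) s, ‖w ^ (-(m + 1)) * f w‖ ≤ s ^ (-(m + 1)) * M := by
    intro w hw
    rw [norm_mul, norm_zpow, mem_sphere_zero_iff_norm.mp hw]
    exact mul_le_mul_of_nonneg_left (hM w hw) (zpow_nonneg hs.le _)
  have := circleIntegral.norm_two_pi_i_inv_smul_integral_le_of_norm_le_const hs.le hbound
  rw [smul_eq_mul] at this
  refine this.trans_eq ?_
  rw [neg_add, zpow_add₀ hs.ne', zpow_neg_one]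
  field_simp

theorem summable_norm_laurentCoeff_mul_zpow (hf : DifferentiableOn ℂ f {0}ᶜ) {s t : ℝ}
    (hs : 0 < s) (ht : 0 < t) : Summable fun m : ℤ => ‖laurentCoeff f s m‖ * t ^ m := by
  have hbound : ∀ u : ℝ, 0 < u → ∃ M, ∀ m : ℤ, ‖laurentCoeff f s m‖ ≤ M * u ^ (-m) := by
    intro u hu
    obtain ⟨M, hM⟩ := (isCompact_sphere (0 : ℂ) u).exists_bound_of_continuousOn
      (hf.continuousOn.mono fun w hw => ne_of_mem_sphere hw hu.ne')
    exact ⟨M, by rw [laurentCoeff_eq_of_pos hf hs hu]; exact norm_laurentCoeff_le hu hM⟩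
  obtain ⟨M₁, hM₁⟩ := hbound (2 * t) (by positivity)
  obtain ⟨M₂, hM₂⟩ := hbound (t / 2) (by positivity)
  have hgeom : Summable fun m : ℕ => (1 / 2 : ℝ) ^ m := summable_geometric_two
  refine Summable.of_nat_of_neg ?_ ?_
  · refine .of_nonneg_of_le (fun m => by positivity) (fun m => ?_) (hgeom.mul_left M₁)
    calc ‖laurentCoeff f s m‖ * t ^ (m : ℤ) ≤ M₁ * (2 * t) ^ (-(m : ℤ)) * t ^ (m : ℤ) := by
          gcongr; exact hM₁ m
      _ = M₁ * (1 / 2 : ℝ) ^ m := by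
          rw [zpow_neg, zpow_natCast, zpow_natCast, mul_pow, one_div_pow]; field_simp
  · refine .of_nonneg_of_le (fun m => by positivity) (fun m => ?_) (hgeom.mul_left M₂)
    calc ‖laurentCoeff f s (-m)‖ * t ^ (-(m : ℤ))
        ≤ M₂ * (t / 2) ^ (-(-(m : ℤ))) * t ^ (-(m : ℤ)) := by
          gcongr; exact hM₂ _
      _ = M₂ * (1 / 2 : ℝ) ^ m := by
          rw [neg_neg, zpow_neg, zpow_natCast, zpow_natCast, div_pow, one_div_pow]; field_simp

theorem circleIntegral_sub_inv_mul_sub_of_mem_annulus (hf : DifferentiableOn ℂ f {0}ᶜ) {z : ℂ}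
    {ρ R : ℝ} (hρ : 0 < ρ) (hρz : ρ < ‖z‖) (hzR : ‖z‖ < R) :
    (∮ w in C(0, R), (w - z)⁻¹ * f w) - (∮ w in C(0, ρ), (w - z)⁻¹ * f w)
      = 2 * π * I * f z := by
  have hz0 : z ≠ 0 := norm_pos_iff.mp (hρ.trans hρz)
  have hslope : DifferentiableOn ℂ (dslope f z) {0}ᶜ :=
    (differentiableOn_dslope (isOpen_compl_singleton.mem_nhds hz0)).mpr hf
  -- away from `z`, `f w / (w - z) = dslope f z w + f z / (w - z)`
  have hsplit : ∀ s : ℝ, 0 < s → ‖z‖ ≠ s → (∮ w in C(0, s), (w - z)⁻¹ * f w)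
      = (∮ w in C(0, s), dslope f z w) + f z * ∮ w in C(0, s), (w - z)⁻¹ := by
    intro s hs hzs
    have hwz : ∀ w ∈ sphere (0 : ℂ) s, w - z ≠ 0 := fun w hw => sub_ne_zero.mpr <| by
      rintro rfl; exact hzs (mem_sphere_zero_iff_norm.mp hw)
    rw [← circleIntegral.integral_const_mul, ← circleIntegral.integral_add]
    · refine circleIntegral.integral_congr hs.le fun w hw => ?_
      rw [dslope_of_ne f (sub_ne_zero.mp (hwz w hw)), slope_def_field]
      field_simp [hwz w hw]
      ring
    · exact (hslope.continuousOn.mono fun w hw => ne_of_mem_sphere hw hs.ne').circleIntegrable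
        hs.le
    · exact (continuousOn_const.mul ((continuousOn_id.sub continuousOn_const).inv₀ hwz)
        ).circleIntegrable hs.le
  have hinner : (∮ w in C(0, ρ), (w - z)⁻¹) = 0 := by
    refine DiffContOnCl.circleIntegral_eq_zero hρ.le <|
      DifferentiableOn.diffContOnCl_ball (U := {z}ᶜ) ?_ fun w hw (h : w = z) => ?_
    · exact ((differentiable_id.sub_const z).differentiableOn).inv fun w hw => sub_ne_zero.mpr hw
    · rw [h, mem_closedBall_zero_iff] at hw; linarith
  rw [hsplit R (hρ.trans (hρz.trans hzR)) hzR.ne, hsplit ρ hρ hρz.ne',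
    circleIntegral_eq_of_differentiableOn_compl_zero hslope (hρ.trans (hρz.trans hzR)) hρ,
    circleIntegral.integral_sub_inv_of_mem_ball (mem_ball_zero_iff.mpr hzR), hinner]
  ring

theorem hasSum_laurentCoeff_mul_zpow (hf : DifferentiableOn ℂ f {0}ᶜ) {s : ℝ} (hs : 0 < s)
    {z : ℂ} (hz : z ≠ 0) : HasSum (fun m : ℤ => laurentCoeff f s m * z ^ m) (f z) := by
  have hz' : 0 < ‖z‖ := norm_pos_iff.mpr hz
  have hR : ‖z‖ < 2 * ‖z‖ := by linarith
  have hρ : ‖z‖ / 2 < ‖z‖ := by linarith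
  have hcont : ∀ t : ℝ, 0 < t → ContinuousOn f (sphere 0 t) := fun t ht =>
    hf.continuousOn.mono fun w hw => ne_of_mem_sphere hw ht.ne'
  have hpos := (hasSum_zpow_mul_circleIntegral_of_norm_lt
    ((hcont _ (by positivity)).circleIntegrable (by positivity)) hR).mul_left (2 * π * I)⁻¹
  have hneg := (hasSum_zpow_mul_circleIntegral_of_lt_norm (by positivity)
    (hcont _ (by positivity)) hρ).mul_left (2 * π * I)⁻¹
  have hflip : (∮ w in C(0, ‖z‖ / 2), (z - w)⁻¹ * f w)
      = -∮ w in C(0, ‖z‖ / 2), (w - z)⁻¹ * f w := by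
    rw [← neg_one_mul, ← circleIntegral.integral_const_mul]
    exact circleIntegral.integral_congr (by positivity) fun w _ => by
      rw [← neg_sub, inv_neg]; ring
  have hval : (2 * π * I)⁻¹ * (∮ w in C(0, 2 * ‖z‖), (w - z)⁻¹ * f w)
      + (2 * π * I)⁻¹ * (∮ w in C(0, ‖z‖ / 2), (z - w)⁻¹ * f w) = f z := by
    rw [hflip, mul_neg, ← sub_eq_add_neg, ← mul_sub,
      circleIntegral_sub_inv_mul_sub_of_mem_annulus hf (by positivity) hρ hR, ← mul_assoc,
      inv_mul_cancel₀ two_pi_I_ne_zero, one_mul]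
  refine hval ▸ HasSum.of_nat_of_neg_add_one (hpos.congr_fun fun m => ?_)
    (hneg.congr_fun fun m => ?_)
  · rw [laurentCoeff_eq_of_pos hf hs (by positivity : 0 < 2 * ‖z‖), laurentCoeff, zpow_natCast]
    ring
  · rw [laurentCoeff_eq_of_pos hf hs (by positivity : 0 < ‖z‖ / 2), laurentCoeff,
      show -(-((m : ℤ) + 1) + 1) = m by ring]
    simp only [zpow_natCast]
    ring

variable {g : ℂ → ℂ} {c : ℂ} {r : ℝ}

theorem exists_summable_bound_laurentCoeff_mul_zpow_mul (hf : DifferentiableOn ℂ f {0}ᶜ)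
    {s : ℝ} (hs : 0 < s) (hr0 : 0 ≤ r) (hr : r < ‖c‖) (hg : ContinuousOn g (sphere c r)) :
    ∃ B : ℤ → ℝ, Summable B ∧
      ∀ m, ∀ z ∈ sphere c r, ‖laurentCoeff f s m * z ^ m * g z‖ ≤ B m := by
  obtain ⟨G, hG⟩ := (isCompact_sphere c r).exists_bound_of_continuousOn hg
  refine ⟨fun m => (‖laurentCoeff f s m‖ * (‖c‖ - r) ^ m
      + ‖laurentCoeff f s m‖ * (‖c‖ + r) ^ m) * G,
    ((summable_norm_laurentCoeff_mul_zpow hf hs (by linarith)).add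
      (summable_norm_laurentCoeff_mul_zpow hf hs (by linarith))).mul_right G, fun m z hz => ?_⟩
  have hzc : ‖z - c‖ = r := mem_sphere_iff_norm.mp hz
  have hlo : ‖c‖ - r ≤ ‖z‖ := by linarith [norm_sub_norm_le c z, norm_sub_rev c z]
  have hhi : ‖z‖ ≤ ‖c‖ + r := by linarith [norm_sub_norm_le z c]
  dsimp only
  rw [norm_mul, norm_mul, norm_zpow, ← mul_add]
  gcongr
  · exact zpow_le_zpow_add_zpow (by linarith) hlo hhi m
  · exact hG z hz

theorem summable_norm_laurentCoeff_mul_circleIntegral (hf : DifferentiableOn ℂ f {0}ᶜ)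
    {s : ℝ} (hs : 0 < s) (hr0 : 0 ≤ r) (hr : r < ‖c‖) (hg : ContinuousOn g (sphere c r)) :
    Summable fun m : ℤ => ‖laurentCoeff f s m * ∮ z in C(c, r), z ^ m * g z‖ := by
  obtain ⟨B, hB, hFB⟩ := exists_summable_bound_laurentCoeff_mul_zpow_mul hf hs hr0 hr hg
  refine .of_nonneg_of_le (fun m => norm_nonneg _) (fun m => ?_) (hB.mul_left (2 * π * r))
  rw [← circleIntegral.integral_const_mul]
  simpa only [mul_assoc] using
    circleIntegral.norm_integral_le_of_norm_le_const hr0 fun z hz => by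
      simpa only [mul_assoc] using hFB m z hz

theorem hasSum_laurentCoeff_mul_circleIntegral (hf : DifferentiableOn ℂ f {0}ᶜ)
    {s : ℝ} (hs : 0 < s) (hr0 : 0 ≤ r) (hr : r < ‖c‖) (hg : ContinuousOn g (sphere c r)) :
    HasSum (fun m : ℤ => laurentCoeff f s m * ∮ z in C(c, r), z ^ m * g z)
      (∮ z in C(c, r), f z * g z) := by
  obtain ⟨B, hB, hFB⟩ := exists_summable_bound_laurentCoeff_mul_zpow_mul hf hs hr0 hr hg
  have hz0 : ∀ z ∈ sphere c r, z ≠ 0 := fun z hz => ne_zero_of_mem_sphere_of_lt_norm hr hz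
  simp_rw [← circleIntegral.integral_const_mul, ← mul_assoc]
  refine hasSum_circleIntegral_of_dominated hr0 (fun m => ?_) hFB hB fun z hz =>
    (hasSum_laurentCoeff_mul_zpow hf hs (hz0 z hz)).mul_right (g z)
  exact ((continuousOn_const.mul (continuousOn_id.zpow₀ m fun z hz => Or.inl (hz0 z hz))).mul
    hg).circleIntegrable hr0

end Laurent

theorem differentiableOn_sub_one_pow_mul_exp (a b : ℝ) (k : ℕ) :
    DifferentiableOn ℂ (fun w : ℂ => (w - 1) ^ k * exp (a * w + b / w)) {0}ᶜ :=
  fun w (hw : w ≠ 0) => (((differentiableAt_id.sub_const 1).pow k).mul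
    (((differentiableAt_const _).mul differentiableAt_id).add
      ((differentiableAt_const _).div differentiableAt_id hw)).cexp).differentiableWithinAt

theorem continuousOn_sub_one_zpow_mul_exp (a b : ℝ) (j : ℕ) {r : ℝ} (hr0 : 0 < r) (hr1 : r < 1) :
    ContinuousOn (fun z : ℂ => (z - 1) ^ (-((j : ℤ) + 1)) * exp (-(a * z) - b / z))
      (sphere 1 r) := fun z hz => by
  have hz1 : z - 1 ≠ 0 := sub_ne_zero.mpr (ne_of_mem_sphere hz hr0.ne')
  have hz0 : z ≠ 0 := ne_zero_of_mem_sphere_of_lt_norm (by rwa [norm_one]) hz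
  exact (((continuousAt_id.sub continuousAt_const).zpow₀ _ (Or.inl hz1)).mul
    ((continuousAt_const.mul continuousAt_id).neg.sub
      (continuousAt_const.div continuousAt_id hz0)).cexp).continuousWithinAt

theorem sub_one_pow_mul_exp_mul_sub_one_zpow_mul_exp (a b : ℝ) (j k : ℕ) {z : ℂ} (hz : z ≠ 1) :
    (z - 1) ^ k * exp (a * z + b / z) * ((z - 1) ^ (-((j : ℤ) + 1)) * exp (-(a * z) - b / z))
      = (z - 1) ^ ((k : ℤ) - (j + 1)) := by
  rw [mul_mul_mul_comm, ← exp_add, show (a : ℂ) * z + b / z + (-(a * z) - b / z) = 0 by ring,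
    exp_zero, mul_one, ← zpow_natCast, ← zpow_add₀ (sub_ne_zero.mpr hz), ← sub_eq_add_neg]

theorem Psi_sub_natCast (n : ℕ) (a b ρ : ℝ) (k : ℕ) (m : ℤ) :
    Psi n a b ρ k (m - n) = laurentCoeff (fun w => (w - 1) ^ k * exp (a * w + b / w)) ρ m := by
  simp only [Psi, laurentCoeff, sub_add_cancel]
  congr 2
  funext w
  ring

theorem Phi_sub_natCast (n : ℕ) (a b r : ℝ) (j : ℕ) (m : ℤ) :
    Phi n a b r j (m - n) = (2 * π * I)⁻¹ *
      ∮ z in C(1, r), z ^ m * ((z - 1) ^ (-((j : ℤ) + 1)) * exp (-(a * z) - b / z)) := by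
  simp only [Phi, sub_add_cancel, mul_assoc]

theorem stmt7_general (n : ℕ) (a b : ℝ)
    (ρ : ℝ) (hρ : 1 < ρ) (r : ℝ) (hr0 : 0 < r) (hr1 : r < 1)
    (j k : ℕ) :
    Summable (fun x : ℤ => ‖Phi n a b r j x * Psi n a b ρ k x‖) ∧
    ∑' x : ℤ, Phi n a b r j x * Psi n a b ρ k x
      = if j = k then 1 else 0 := by
  set f : ℂ → ℂ := fun w => (w - 1) ^ k * exp (a * w + b / w)
  set g : ℂ → ℂ := fun z => (z - 1) ^ (-((j : ℤ) + 1)) * exp (-(a * z) - b / z)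
  have hf := differentiableOn_sub_one_pow_mul_exp a b k
  have hg := continuousOn_sub_one_zpow_mul_exp a b j hr0 hr1
  have hρ0 : 0 < ρ := one_pos.trans hρ
  have hr : r < ‖(1 : ℂ)‖ := by rwa [norm_one]
  have hterm : ∀ m : ℤ, Phi n a b r j (m - n) * Psi n a b ρ k (m - n)
      = (2 * π * I)⁻¹ * (laurentCoeff f ρ m * ∮ z in C(1, r), z ^ m * g z) := fun m => by
    rw [Phi_sub_natCast, Psi_sub_natCast]
    ring
  constructor
  · rw [← (Equiv.subRight (n : ℤ)).summable_iff]
    simp only [Function.comp_def, Equiv.subRight_apply, hterm]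
    exact ((summable_norm_laurentCoeff_mul_circleIntegral hf hρ0 hr0.le hr hg).mul_left _).congr
      fun m => (norm_mul _ _).symm
  · rw [← (Equiv.subRight (n : ℤ)).tsum_eq]
    simp only [Equiv.subRight_apply, hterm]
    rw [((hasSum_laurentCoeff_mul_circleIntegral hf hρ0 hr0.le hr hg).mul_left _).tsum_eq,
      circleIntegral.integral_congr hr0.le fun z hz =>
        sub_one_pow_mul_exp_mul_sub_one_zpow_mul_exp a b j k (ne_of_mem_sphere hz hr0.ne'),
      circleIntegral_sub_center_zpow hr0]
    split_ifs with h1 h2 h2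
    · exact inv_mul_cancel₀ two_pi_I_ne_zero
    · omega
    · omega
    · exact mul_zero _

/-- biorthogonality `∑_{x∈ℤ} Φ_j(x) Ψ_k(x) = δ_{j,k}` for
`0 ≤ j, k ≤ n−1`, with absolute convergence of the series. -/
theorem stmt7 (n : ℕ) (hn : 1 ≤ n) (a b : ℝ)
    (ρ : ℝ) (hρ : 1 < ρ) (r : ℝ) (hr0 : 0 < r) (hr1 : r < 1)
    (j k : ℕ) (hj : j ≤ n - 1) (hk : k ≤ n - 1) :
    Summable (fun x : ℤ => ‖Phi n a b r j x * Psi n a b ρ k x‖) ∧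
    ∑' x : ℤ, Phi n a b r j x * Psi n a b ρ k x
      = if j = k then 1 else 0 :=
  stmt7_general n a b ρ hρ r hr0 hr1 j k
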